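/- arXiv:1509.02319 — 2 statements merged into one kernel-verified Lean document; each statement's English description precedes it below -/
import Mathlib

section
/- Let (X₁,X₂) have joint distribution with copula C and continuous margins F₁, F₂, and suppose the partial derivative ∂C/∂u exists. Then ∂₁C(F₁(x₁), F₂(x₂)) equals the conditional distribution P(X₂ ≤ x₂ | X₁ = x₁) for almost every x₁ (with respect to the law of X₁). -/
open MeasureTheory ProbabilityTheory Set
open scoped ProbabilityTheory ENNReal

/-!
Fix `x₂` and put `G u = C u (F₂ x₂)`. Sklar's identity says that `G ∘ F₁` is the joint
distribution function `t ↦ P(X₁ ≤ t, X₂ ≤ x₂)`, so `G` is monotone on the range of `F₁`, which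
contains `(0, 1)`, and `G 0 = 0`. Hence `∂₁C(·, F₂ x₂) ≥ 0` there and integrates to `G`. Since
`F₁(X₁)` is uniform on `(0, 1]` (continuity of `F₁`), the change of variables `u = F₁ x` turns this
into `∫_{x ≤ t} ∂₁C(F₁ x, F₂ x₂) dP_{X₁} = P(X₁ ≤ t, X₂ ≤ x₂)`. The conditional distribution has the
same integrals over all half-lines `Iic t`, so the two densities agree `P_{X₁}`-almost everywhere.
-/

theorem MonotoneOn.of_monotone_comp {α β γ : Type*} [LinearOrder α] [PartialOrder β] [Preorder γ]
    {f : α → β} {g : β → γ} (hf : Monotone f) (hgf : Monotone (g ∘ f)) :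
    MonotoneOn g (range f) := by
  rintro _ ⟨a, rfl⟩ _ ⟨b, rfl⟩ hab
  rcases hab.eq_or_lt with h | h
  · rw [h]
  · exact hgf (hf.reflect_lt h).le

theorem measurable_of_forall_hasDerivAt {𝕜 F : Type*} [NontriviallyNormedField 𝕜]
    [NormedAddCommGroup F] [NormedSpace 𝕜 F] [CompleteSpace F] [MeasurableSpace 𝕜]
    [OpensMeasurableSpace 𝕜] [MeasurableSpace F] [BorelSpace F] {f f' : 𝕜 → F}
    (hf : ∀ x, HasDerivAt f (f' x) x) : Measurable f' :=
  (funext fun x => (hf x).deriv) ▸ measurable_deriv f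

theorem lintegral_Ioc_ofReal_deriv_eq_sub {G G' : ℝ → ℝ} {a b : ℝ} (hab : a ≤ b)
    (hcont : ContinuousOn G (Icc a b)) (hderiv : ∀ x ∈ Ioo a b, HasDerivAt G (G' x) x)
    (hpos : ∀ x ∈ Ioo a b, 0 ≤ G' x) :
    ∫⁻ x in Ioc a b, ENNReal.ofReal (G' x) = ENNReal.ofReal (G b - G a) := by
  have hint : IntervalIntegrable G' volume a b := by
    refine intervalIntegral.intervalIntegrable_deriv_of_nonneg (by rwa [uIcc_of_le hab]) ?_ ?_
      <;> rwa [min_eq_left hab, max_eq_right hab]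
  rw [setLIntegral_congr Ioo_ae_eq_Ioc.symm, ← ofReal_integral_eq_lintegral_ofReal
    (hint.1.mono_set Ioo_subset_Ioc_self) (ae_restrict_of_forall_mem measurableSet_Ioo hpos),
    ← integral_Ioc_eq_integral_Ioo, ← intervalIntegral.integral_of_le hab,
    intervalIntegral.integral_eq_sub_of_hasDerivAt_of_le hab hcont hderiv hint]

theorem ae_eq_of_forall_setLIntegral_Iic_eq {α : Type*} [TopologicalSpace α] [MeasurableSpace α]
    [SecondCountableTopology α] [LinearOrder α] [OrderTopology α] [BorelSpace α] {μ : Measure α}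
    {f g : α → ℝ≥0∞} (hf : AEMeasurable f μ) (hg : AEMeasurable g μ) (hfi : ∫⁻ x, f x ∂μ ≠ ∞)
    (h : ∀ t, ∫⁻ x in Iic t, f x ∂μ = ∫⁻ x in Iic t, g x ∂μ) : f =ᵐ[μ] g := by
  have := isFiniteMeasure_withDensity hfi
  refine (withDensity_eq_iff hf hg hfi).1 (Measure.ext_of_Iic _ _ fun t => ?_)
  rw [withDensity_apply _ measurableSet_Iic, withDensity_apply _ measurableSet_Iic, h]

namespace ProbabilityTheory

variable {μ : Measure ℝ}

theorem Ioo_subset_range_cdf (hμ : Continuous (cdf μ)) : Ioo 0 1 ⊆ range (cdf μ) :=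
  fun _ hu => mem_range_of_exists_le_of_exists_ge hμ
    ((tendsto_cdf_atBot μ).eventually_le_const hu.1).exists
    ((tendsto_cdf_atTop μ).eventually_const_le hu.2).exists

theorem _root_.HasDerivAt.nonneg_of_monotone_comp_cdf {G : ℝ → ℝ} {g' u : ℝ}
    (hG : HasDerivAt G g' u) (hμ : Continuous (cdf μ)) (hGμ : Monotone (G ∘ cdf μ))
    (hu : u ∈ Ioo 0 1) : 0 ≤ g' := by
  have := ((MonotoneOn.of_monotone_comp (monotone_cdf μ) hGμ).mono
    (Ioo_subset_range_cdf hμ)).derivWithin_nonneg (x := u)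
  rwa [derivWithin_of_mem_nhds (Ioo_mem_nhds hu.1 hu.2), hG.deriv] at this

variable [IsProbabilityMeasure μ]

theorem measure_preimage_cdf_Iic_of_lt_one (hμ : Continuous (cdf μ)) {u : ℝ} (hu : u < 1) :
    μ (cdf μ ⁻¹' Iic u) = ENNReal.ofReal u := by
  set S := cdf μ ⁻¹' Iic u
  rcases S.eq_empty_or_nonempty with hS | hS
  · have hu_nonpos : u ≤ 0 := not_lt.1 fun hu_pos =>
      ((tendsto_cdf_atBot μ).eventually_le_const hu_pos).exists.elim fun a ha =>
        (hS ▸ ha : a ∈ (∅ : Set ℝ))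
    rw [hS, measure_empty, ENNReal.ofReal_of_nonpos hu_nonpos]
  obtain ⟨b, hb⟩ := ((tendsto_cdf_atTop μ).eventually_const_lt hu).exists
  have hbdd : BddAbove S := ⟨b, fun x hx => ((monotone_cdf μ).reflect_lt (hx.trans_lt hb)).le⟩
  set s := sSup S
  have hsS : s ∈ S := (isClosed_Iic.preimage hμ).csSup_mem hS hbdd
  have hS_eq : S = Iic s :=
    Subset.antisymm (fun x hx => le_csSup hbdd hx) fun x hx => (monotone_cdf μ hx).trans hsS
  have hs : cdf μ s = u := by
    refine le_antisymm hsS (ge_of_tendsto (hμ.continuousWithinAt (s := Ioi s) (x := s))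
      (eventually_nhdsWithin_of_forall fun x hx => ?_))
    have hxS : x ∉ S := by rw [hS_eq]; exact not_le.2 (show s < x from hx)
    exact (not_le.1 hxS).le
  rw [hS_eq, ← ofReal_cdf, hs]

theorem map_cdf_eq_restrict_Ioc (hμ : Continuous (cdf μ)) :
    μ.map (cdf μ) = volume.restrict (Ioc 0 1) := by
  refine Measure.ext_of_Iic _ _ fun u => ?_
  rw [Measure.map_apply hμ.measurable measurableSet_Iic, Measure.restrict_apply measurableSet_Iic,
    inter_comm, Ioc_inter_Iic, Real.volume_Ioc, sub_zero]
  rcases lt_or_ge u 1 with hu1 | hu1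
  · rw [measure_preimage_cdf_Iic_of_lt_one hμ hu1, min_eq_right hu1.le]
  · have : cdf μ ⁻¹' Iic u = univ := eq_univ_of_forall fun x => (cdf_le_one μ x).trans hu1
    rw [this, measure_univ, min_eq_left hu1, ENNReal.ofReal_one]

theorem Iic_ae_eq_preimage_cdf (hμ : Continuous (cdf μ)) (t : ℝ) :
    Iic t =ᵐ[μ] cdf μ ⁻¹' Iic (cdf μ t) := by
  refine ae_eq_of_subset_of_measure_ge (fun x hx => monotone_cdf μ hx) (le_of_eq ?_)
    measurableSet_Iic.nullMeasurableSet (measure_ne_top _ _)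
  rw [← Measure.map_apply hμ.measurable measurableSet_Iic, map_cdf_eq_restrict_Ioc hμ,
    Measure.restrict_apply measurableSet_Iic, inter_comm, Ioc_inter_Iic,
    min_eq_right (cdf_le_one μ t), Real.volume_Ioc, sub_zero, ofReal_cdf]

theorem setLIntegral_Iic_comp_cdf (hμ : Continuous (cdf μ)) {f : ℝ → ℝ≥0∞} (hf : Measurable f)
    (t : ℝ) : ∫⁻ x in Iic t, f (cdf μ x) ∂μ = ∫⁻ u in Ioc 0 (cdf μ t), f u := by
  rw [setLIntegral_congr (Iic_ae_eq_preimage_cdf hμ t),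
    ← setLIntegral_map measurableSet_Iic hf hμ.measurable, map_cdf_eq_restrict_Ioc hμ,
    Measure.restrict_restrict measurableSet_Iic, inter_comm, Ioc_inter_Iic,
    min_eq_right (cdf_le_one μ t)]

theorem ae_cdf_mem_Ioo (hμ : Continuous (cdf μ)) : ∀ᵐ x ∂μ, cdf μ x ∈ Ioo 0 1 := by
  refine ae_of_ae_map hμ.measurable.aemeasurable (p := (· ∈ Ioo 0 1)) ?_
  rw [map_cdf_eq_restrict_Ioc hμ]
  exact (ae_restrict_congr_set Ioo_ae_eq_Ioc).1 (ae_restrict_mem measurableSet_Ioo)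

theorem setLIntegral_Iic_ofReal_deriv_comp_cdf {G G' : ℝ → ℝ} (hμ : Continuous (cdf μ))
    (hG : ∀ u, HasDerivAt G (G' u) u) (hGμ : Monotone (G ∘ cdf μ)) (t : ℝ) :
    ∫⁻ x in Iic t, ENNReal.ofReal (G' (cdf μ x)) ∂μ = ENNReal.ofReal (G (cdf μ t) - G 0) := by
  rw [setLIntegral_Iic_comp_cdf hμ (measurable_of_forall_hasDerivAt hG).ennreal_ofReal]
  exact lintegral_Ioc_ofReal_deriv_eq_sub (cdf_nonneg μ t)
    (fun u _ => (hG u).continuousAt.continuousWithinAt) (fun u _ => hG u)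
    fun u hu => (hG u).nonneg_of_monotone_comp_cdf hμ hGμ ⟨hu.1, hu.2.trans_le (cdf_le_one μ t)⟩

end ProbabilityTheory

theorem ProbabilityTheory.setLIntegral_map_condDistrib {α β γ : Type*} [MeasurableSpace α]
    [MeasurableSpace β] [MeasurableSpace γ] [StandardBorelSpace γ] [Nonempty γ] {μ : Measure α}
    [IsFiniteMeasure μ] {X : α → β} {Y : α → γ} (hX : Measurable X) (hY : AEMeasurable Y μ)
    {s : Set γ} {t : Set β} (hs : MeasurableSet s) (ht : MeasurableSet t) :
    ∫⁻ b in t, condDistrib Y X μ b s ∂(μ.map X) = μ (X ⁻¹' t ∩ Y ⁻¹' s) := by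
  rw [setLIntegral_map ht (Kernel.measurable_coe _ hs) hX,
    setLIntegral_preimage_condDistrib hX hY hs ht]

theorem copula_partial_deriv_eq_condDistrib_general {Ω : Type*} [MeasureSpace Ω]
    [IsProbabilityMeasure (ℙ : Measure Ω)]
    (X₁ X₂ : Ω → ℝ) (hX₁ : Measurable X₁) (hX₂ : Measurable X₂)
    (F₁ F₂ : ℝ → ℝ)
    (hF₁ : ∀ x, F₁ x = (ℙ {ω | X₁ ω ≤ x}).toReal)
    (hF₁c : Continuous F₁)
    (C D : ℝ → ℝ → ℝ)
    (hSklar : ∀ x₁ x₂, (ℙ {ω | X₁ ω ≤ x₁ ∧ X₂ ω ≤ x₂}).toReal = C (F₁ x₁) (F₂ x₂))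
    (hD : ∀ u v : ℝ, HasDerivAt (fun a => C a v) (D u v) u) :
    ∀ x₂ : ℝ, ∀ᵐ x₁ ∂((ℙ : Measure Ω).map X₁),
      D (F₁ x₁) (F₂ x₂) = (condDistrib X₂ X₁ ℙ x₁ (Iic x₂)).toReal := by
  intro x₂
  set μ := (ℙ : Measure Ω).map X₁
  have : IsProbabilityMeasure μ := Measure.isProbabilityMeasure_map hX₁.aemeasurable
  obtain rfl : F₁ = cdf μ := funext fun x => by
    rw [hF₁, cdf_eq_real, measureReal_def, Measure.map_apply hX₁ measurableSet_Iic]; rfl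
  set G := fun u => C u (F₂ x₂)
  have hG : ∀ t, (ℙ {ω | X₁ ω ≤ t ∧ X₂ ω ≤ x₂}).toReal = G (cdf μ t) := fun t => hSklar t x₂
  have hGμ : Monotone (G ∘ cdf μ) := fun a b hab => by
    simp only [Function.comp, ← hG]
    exact measureReal_mono fun ω h => ⟨h.1.trans hab, h.2⟩
  have hG_zero : G 0 = 0 := by
    refine tendsto_nhds_unique (((hD 0 _).continuousAt (f := G)).tendsto.comp
      (tendsto_cdf_atBot μ)) <|
      squeeze_zero (fun a => ?_) (fun a => ?_) (tendsto_cdf_atBot μ)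
    · simp only [Function.comp, ← hG]; exact ENNReal.toReal_nonneg
    · rw [Function.comp_apply, ← hG, hF₁]
      exact measureReal_mono fun _ => And.left
  have h_cond_density : (fun x => condDistrib X₂ X₁ ℙ x (Iic x₂)) =ᵐ[μ]
      fun x => ENNReal.ofReal (D (cdf μ x) (F₂ x₂)) := by
    refine ae_eq_of_forall_setLIntegral_Iic_eq
      (Kernel.measurable_coe _ measurableSet_Iic).aemeasurable
      ((measurable_of_forall_hasDerivAt (hD · _)).comp hF₁c.measurable).ennreal_ofReal.aemeasurable
      ((lintegral_mono fun _ => prob_le_one).trans_lt (by simp)).ne fun t => ?_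
    rw [setLIntegral_Iic_ofReal_deriv_comp_cdf (G := G) hF₁c (hD · _) hGμ, hG_zero, sub_zero, ← hG,
      ENNReal.ofReal_toReal (measure_ne_top _ _),
      setLIntegral_map_condDistrib hX₁ hX₂.aemeasurable measurableSet_Iic measurableSet_Iic]
    rfl
  filter_upwards [h_cond_density, ae_cdf_mem_Ioo hF₁c] with x hx hx01
  rw [hx, ENNReal.toReal_ofReal ((hD _ _).nonneg_of_monotone_comp_cdf hF₁c hGμ hx01)]

/-- The partial derivative ∂₁C(F₁(x₁), F₂(x₂)) of the copula of (X₁,X₂) equals the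
conditional distribution P(X₂ ≤ x₂ | X₁ = x₁), for a.e. x₁ with respect to the law
of X₁. -/
theorem copula_partial_deriv_eq_condDistrib {Ω : Type*} [MeasureSpace Ω]
    [IsProbabilityMeasure (ℙ : Measure Ω)]
    (X₁ X₂ : Ω → ℝ) (hX₁ : Measurable X₁) (hX₂ : Measurable X₂)
    (F₁ F₂ : ℝ → ℝ)
    (hF₁ : ∀ x, F₁ x = (ℙ {ω | X₁ ω ≤ x}).toReal)
    (hF₂ : ∀ x, F₂ x = (ℙ {ω | X₂ ω ≤ x}).toReal)
    (hF₁c : Continuous F₁) (hF₂c : Continuous F₂)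
    (C D : ℝ → ℝ → ℝ)
    (hSklar : ∀ x₁ x₂, (ℙ {ω | X₁ ω ≤ x₁ ∧ X₂ ω ≤ x₂}).toReal = C (F₁ x₁) (F₂ x₂))
    (hD : ∀ u v : ℝ, HasDerivAt (fun a => C a v) (D u v) u) :
    ∀ x₂ : ℝ, ∀ᵐ x₁ ∂((ℙ : Measure Ω).map X₁),
      D (F₁ x₁) (F₂ x₂) = (condDistrib X₂ X₁ ℙ x₁ (Iic x₂)).toReal :=
  copula_partial_deriv_eq_condDistrib_general X₁ X₂ hX₁ hX₂ F₁ F₂ hF₁ hF₁c C D hSklar hD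
end

section
/- Let (X_s, X_t) have copula C_{s,t}(u,v) = F_{s,t}(F_s^{-1}(u), F_t^{-1}(v)) with continuous strictly increasing margins F_s, F_t. Then as s ↑ t (assuming X_s → X_t in probability and F_s → F_t pointwise), C_{s,t}(u,v) converges to min(u,v), the Fréchet upper bound copula, for every (u,v) ∈ [0,1]². -/
/-!
Write `b = F_t⁻¹(v)`. Since `F_s(F_s⁻¹(u)) = u` and `F_t(b) = v`, the marginals bound the joint
probability by `min(u, v)` for every `s`. Conversely, off the event `|X_s - X_t| ≥ ε`, the event
`X_s ≤ F_s⁻¹(u), X_s ≤ b - ε` forces `X_t ≤ b`; for the single variable `X_s` that event has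
probability `min(u, F_s(b - ε))`, the Fréchet upper bound computation. So the joint probability is
at least `min(u, F_s(b - ε)) - ℙ(|X_s - X_t| ≥ ε)`, which tends to `min(u, F_t(b - ε))` as `s ↑ t`,
and this is close to `min(u, v)` for small `ε` by continuity of `F_t`.
-/

open MeasureTheory Set Filter
open scoped ProbabilityTheory Topology

namespace MeasureTheory

variable {Ω : Type*} [MeasurableSpace Ω] (μ : Measure Ω) [IsFiniteMeasure μ] (Y Z : Ω → ℝ)

theorem monotone_measureReal_setOf_le : Monotone fun x => μ.real {ω | Y ω ≤ x} :=
  fun _ _ hxy => measureReal_mono fun _ hω => le_trans hω hxy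

theorem measureReal_setOf_le_and_le (x y : ℝ) :
    μ.real {ω | Y ω ≤ x ∧ Y ω ≤ y} = min (μ.real {ω | Y ω ≤ x}) (μ.real {ω | Y ω ≤ y}) := by
  simp_rw [← le_min_iff]
  exact (monotone_measureReal_setOf_le μ Y).map_min

theorem measureReal_setOf_le_and_le_le_min (x y : ℝ) :
    μ.real {ω | Y ω ≤ x ∧ Z ω ≤ y} ≤ min (μ.real {ω | Y ω ≤ x}) (μ.real {ω | Z ω ≤ y}) :=
  le_min (measureReal_mono fun _ hω => hω.1) (measureReal_mono fun _ hω => hω.2)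

theorem min_sub_measureReal_le_measureReal_setOf_le_and_le (x y ε : ℝ) :
    min (μ.real {ω | Y ω ≤ x}) (μ.real {ω | Y ω ≤ y - ε}) - μ.real {ω | ε ≤ |Y ω - Z ω|} ≤
      μ.real {ω | Y ω ≤ x ∧ Z ω ≤ y} := by
  have hsub : {ω | Y ω ≤ x ∧ Y ω ≤ y - ε} ⊆
      {ω | Y ω ≤ x ∧ Z ω ≤ y} ∪ {ω | ε ≤ |Y ω - Z ω|} := by
    intro ω ⟨hx, hy⟩
    by_cases hclose : ε ≤ |Y ω - Z ω|
    · exact Or.inr hclose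
    · exact Or.inl ⟨hx, by linarith [neg_abs_le (Y ω - Z ω), not_le.mp hclose]⟩
  rw [← measureReal_setOf_le_and_le]
  linarith [(measureReal_mono (μ := μ) hsub).trans (measureReal_union_le _ _)]

end MeasureTheory

theorem copula_tendsto_frechet_upper_general {Ω : Type*} [MeasureSpace Ω]
    [IsProbabilityMeasure (ℙ : Measure Ω)]
    (X : ℝ → Ω → ℝ)
    (t : ℝ)
    (F : ℝ → ℝ → ℝ)
    (hF : ∀ s x, F s x = (ℙ {ω | X s ω ≤ x}).toReal)
    (hFc : ∀ s, Continuous (F s))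
    (Q : ℝ → ℝ → ℝ)
    (hQ : ∀ s, ∀ u ∈ Ioo (0:ℝ) 1, F s (Q s u) = u)
    -- convergence in probability of X_s to X_t as s ↑ t:
    (hprob : ∀ ε : ℝ, 0 < ε →
      Tendsto (fun s => (ℙ {ω | ε ≤ |X s ω - X t ω|}).toReal) (𝓝[<] t) (𝓝 0))
    -- pointwise convergence of the distribution functions:
    (hFconv : ∀ x, Tendsto (fun s => F s x) (𝓝[<] t) (𝓝 (F t x))) :
    ∀ u ∈ Ioo (0:ℝ) 1, ∀ v ∈ Ioo (0:ℝ) 1,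
      Tendsto (fun s => (ℙ {ω | X s ω ≤ Q s u ∧ X t ω ≤ Q t v}).toReal)
        (𝓝[<] t) (𝓝 (min u v)) := by
  intro u hu v hv
  simp_rw [← measureReal_def] at hF hprob ⊢
  refine tendsto_order.2 ⟨fun a ha => ?_, fun a ha => Eventually.of_forall fun s => ?_⟩
  · have hleft : Tendsto (fun ε => F t (Q t v - ε)) (𝓝[>] 0) (𝓝 v) :=
      (((hFc t).comp (continuous_sub_left _)).tendsto' 0 v (by simp [hQ t v hv])).mono_left
        nhdsWithin_le_nhds
    obtain ⟨ε, hav, hε⟩ := ((hleft.eventually (lt_mem_nhds (lt_min_iff.mp ha).2)).and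
      self_mem_nhdsWithin).exists
    have hlower := ((tendsto_const_nhds (x := u)).min (hFconv (Q t v - ε))).sub (hprob ε hε)
    rw [sub_zero] at hlower
    filter_upwards [hlower.eventually (lt_mem_nhds (lt_min (lt_min_iff.mp ha).1 hav))] with s hs
    have hbound := min_sub_measureReal_le_measureReal_setOf_le_and_le ℙ (X s) (X t) (Q s u) (Q t v) ε
    rw [← hF, ← hF, hQ s u hu] at hbound
    exact hs.trans_le hbound
  · refine lt_of_le_of_lt ?_ ha
    have hbound := measureReal_setOf_le_and_le_le_min ℙ (X s) (X t) (Q s u) (Q t v)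
    rwa [← hF, ← hF, hQ s u hu, hQ t v hv] at hbound

/-- As s ↑ t, assuming X_s → X_t in probability and pointwise convergence of the
marginal distribution functions, the copula C_{s,t}(u,v) = F_{s,t}(F_s⁻¹(u), F_t⁻¹(v))
converges to the Fréchet upper bound min(u,v). -/
theorem copula_tendsto_frechet_upper {Ω : Type*} [MeasureSpace Ω]
    [IsProbabilityMeasure (ℙ : Measure Ω)]
    (X : ℝ → Ω → ℝ) (hX : ∀ s, Measurable (X s))
    (t : ℝ)
    (F : ℝ → ℝ → ℝ)
    (hF : ∀ s x, F s x = (ℙ {ω | X s ω ≤ x}).toReal)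
    (hFc : ∀ s, Continuous (F s)) (hFm : ∀ s, StrictMono (F s))
    (Q : ℝ → ℝ → ℝ)
    (hQ : ∀ s, ∀ u ∈ Ioo (0:ℝ) 1, F s (Q s u) = u)
    -- convergence in probability of X_s to X_t as s ↑ t:
    (hprob : ∀ ε : ℝ, 0 < ε →
      Tendsto (fun s => (ℙ {ω | ε ≤ |X s ω - X t ω|}).toReal) (𝓝[<] t) (𝓝 0))
    -- pointwise convergence of the distribution functions:
    (hFconv : ∀ x, Tendsto (fun s => F s x) (𝓝[<] t) (𝓝 (F t x))) :
    ∀ u ∈ Ioo (0:ℝ) 1, ∀ v ∈ Ioo (0:ℝ) 1,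
      Tendsto (fun s => (ℙ {ω | X s ω ≤ Q s u ∧ X t ω ≤ Q t v}).toReal)
        (𝓝[<] t) (𝓝 (min u v)) :=
  copula_tendsto_frechet_upper_general X t F hF hFc Q hQ hprob hFconv
end
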